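/- Let G = (V,E) be a connected finite simple graph with n = |V|, let k be the largest cardinality of an independent set of G, and let 𝒢 be the graph obtained from G by the subdivision-path-apex construction. Then every proper skew stalled subset 𝒮 of 𝒢 has cardinality at most (2n+1)·|E| + k. -/

import Mathlib

/-!
Skew stalling propagates along each pendant path `e^0, …, e^{2n}`: the leaf `e^{2n}` forces
`e^{2n-1}` to be filled, and an inner vertex `e^{i+1}` makes `e^i` and `e^{i+2}` filled or empty
together. So every odd path vertex is filled, and the even vertices of one path are all filled or
all empty. It remains to find `n + 1 - k` empty vertices. If `ε` is empty, the filled vertices of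
`G` are independent, since a filled edge `uv` would leave `ε` as the only empty neighbour of
`e^0`. If `ε` is filled, an empty vertex of `G` makes its `G`-neighbours empty (again through
`e^0`), so by connectivity all of `V` is empty. If `ε` and `V` are filled, some `e^i` is empty,
and with it the `n + 1` even vertices of its path.
-/

/-- An empty vertex `v` is forced by the filled set `F` if some filled vertex `u ∈ F`
adjacent to `v` has `v` as its unique neighbor outside `F`. -/
def IsForced {W : Type*} (H : SimpleGraph W) (F : Set W) (v : W) : Prop :=
  v ∉ F ∧ ∃ u, u ∈ F ∧ H.Adj u v ∧ ∀ w, H.Adj u w → w ∉ F → w = v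

/-- An empty vertex `v` is skew forced by `F` if some vertex `u` (filled or not)
adjacent to `v` has `v` as its unique neighbor outside `F`. -/
def IsSkewForced {W : Type*} (H : SimpleGraph W) (F : Set W) (v : W) : Prop :=
  v ∉ F ∧ ∃ u, H.Adj u v ∧ ∀ w, H.Adj u w → w ∉ F → w = v

/-- `F` is stalled if no empty vertex is forced by `F`. -/
def Stalled {W : Type*} (H : SimpleGraph W) (F : Set W) : Prop :=
  ∀ v, ¬ IsForced H F v

/-- `F` is skew stalled if no empty vertex is skew forced by `F`. -/
def SkewStalled {W : Type*} (H : SimpleGraph W) (F : Set W) : Prop :=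
  ∀ v, ¬ IsSkewForced H F v

/-- A set of vertices is independent if its vertices are pairwise non-adjacent. -/
def IndepIn {W : Type*} (H : SimpleGraph W) (U : Set W) : Prop :=
  U.Pairwise fun a b => ¬ H.Adj a b

/-- Vertex set of the subdivision-path-apex construction: the vertices of `G`,
vertices `e^i` for each edge `e` and `0 ≤ i ≤ 2n`, and one apex vertex `ε`. -/
abbrev GVert {V : Type*} [Fintype V] (G : SimpleGraph V) : Type _ :=
  V ⊕ (G.edgeSet × Fin (2 * Fintype.card V + 1)) ⊕ Unit

/-- Generating relation: `v ~ e^0` when `v ∈ e`; `e^i ~ e^{i+1}`; `ε ~ e^0`. -/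
def gRel {V : Type*} [Fintype V] (G : SimpleGraph V) : GVert G → GVert G → Prop
  | Sum.inl v, Sum.inr (Sum.inl (e, i)) => i.val = 0 ∧ v ∈ (e : Sym2 V)
  | Sum.inr (Sum.inl (e, i)), Sum.inr (Sum.inl (e', j)) => e = e' ∧ i.val + 1 = j.val
  | Sum.inr (Sum.inr _), Sum.inr (Sum.inl (_, i)) => i.val = 0
  | _, _ => False

/-- The subdivision-path-apex construction `𝒢`. -/
def GG {V : Type*} [Fintype V] (G : SimpleGraph V) : SimpleGraph (GVert G) :=
  SimpleGraph.fromRel (gRel G)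

theorem Nat.iff_of_iff_add_two {p : ℕ → Prop} {N : ℕ}
    (hp : ∀ m, m + 2 ≤ N → (p m ↔ p (m + 2))) {a b : ℕ} (ha : a ≤ N) (hb : b ≤ N)
    (hab : a % 2 = b % 2) : p a ↔ p b := by
  have step : ∀ t a, a + 2 * t ≤ N → (p a ↔ p (a + 2 * t)) := by
    intro t
    induction t with
    | zero => simp
    | succ t ih =>
      intro a h
      rw [ih a (by omega), hp _ (by omega), Nat.mul_succ, ← Nat.add_assoc]
  rcases le_total a b with h | h
  · simpa [show a + 2 * ((b - a) / 2) = b by omega] using step ((b - a) / 2) a (by omega)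
  · simpa [show b + 2 * ((a - b) / 2) = a by omega] using (step ((a - b) / 2) b (by omega)).symm

theorem Fin.val_ofNat_of_le {n i : ℕ} (hi : i ≤ n) : (Fin.ofNat (n + 1) i : ℕ) = i := by
  rw [Fin.val_ofNat, Nat.mod_eq_of_lt (Nat.lt_succ_of_le hi)]

theorem SimpleGraph.card_pos_of_edgeSet {V : Type*} [Fintype V] {G : SimpleGraph V}
    (e : G.edgeSet) : 0 < Fintype.card V :=
  Fintype.card_pos_iff.mpr ⟨(Quot.out (e : Sym2 V)).1⟩

namespace SkewStalled

variable {W : Type*} {H : SimpleGraph W} {S : Set W}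

theorem mem_of_neighborSet_subset_insert (hS : SkewStalled H S) {u v : W} (huv : H.Adj u v)
    (h : H.neighborSet u ⊆ insert v S) : v ∈ S := by
  by_contra hv
  exact hS v ⟨hv, u, huv, fun w huw hw => (h huw).resolve_right hw⟩

theorem mem_of_neighborSet_subset_singleton (hS : SkewStalled H S) {u v : W} (huv : H.Adj u v)
    (h : H.neighborSet u ⊆ {v}) : v ∈ S :=
  hS.mem_of_neighborSet_subset_insert huv (h.trans (by simp))

theorem mem_iff_of_neighborSet_subset_pair (hS : SkewStalled H S) {u a b : W} (hua : H.Adj u a)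
    (hub : H.Adj u b) (h : H.neighborSet u ⊆ {a, b}) : a ∈ S ↔ b ∈ S := by
  constructor
  · intro ha
    refine hS.mem_of_neighborSet_subset_insert hub (h.trans ?_)
    rintro w (rfl | rfl) <;> simp [ha]
  · intro hb
    refine hS.mem_of_neighborSet_subset_insert hua (h.trans ?_)
    rintro w (rfl | rfl) <;> simp [hb]

end SkewStalled

namespace GG

variable {V : Type*} [Fintype V] {G : SimpleGraph V}

/-- The vertex `e^i`, with `i` read modulo `2n + 1`. -/
def pathVert (e : G.edgeSet) (i : ℕ) : GVert G :=
  Sum.inr (Sum.inl (e, Fin.ofNat _ i))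

variable (G) in
def apex : GVert G := Sum.inr (Sum.inr ())

theorem pathVert_val (e : G.edgeSet) (j : Fin (2 * Fintype.card V + 1)) :
    pathVert e j = Sum.inr (Sum.inl (e, j)) := by
  rw [pathVert, Fin.ofNat_val_eq_self]

theorem pathVert_inj {e e' : G.edgeSet} {i j : ℕ} (hi : i ≤ 2 * Fintype.card V)
    (hj : j ≤ 2 * Fintype.card V) : pathVert e i = pathVert e' j ↔ e = e' ∧ i = j := by
  simp only [pathVert, Sum.inr.injEq, Sum.inl.injEq, Prod.mk.injEq, Fin.ext_iff,
    Fin.val_ofNat_of_le hi, Fin.val_ofNat_of_le hj]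

theorem adj_pathVert_pathVert_iff {e e' : G.edgeSet} {i j : ℕ} (hi : i ≤ 2 * Fintype.card V)
    (hj : j ≤ 2 * Fintype.card V) :
    (GG G).Adj (pathVert e i) (pathVert e' j) ↔ e = e' ∧ (i + 1 = j ∨ j + 1 = i) := by
  rw [GG, SimpleGraph.fromRel_adj, ne_eq, pathVert_inj hi hj]
  simp only [pathVert, gRel, Fin.val_ofNat_of_le hi, Fin.val_ofNat_of_le hj]
  grind

theorem adj_inl_pathVert_iff {x : V} {e : G.edgeSet} {i : ℕ} (hi : i ≤ 2 * Fintype.card V) :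
    (GG G).Adj (Sum.inl x) (pathVert e i) ↔ i = 0 ∧ x ∈ (e : Sym2 V) := by
  simp only [GG, SimpleGraph.fromRel_adj, pathVert, gRel, Fin.val_ofNat_of_le hi, ne_eq,
    reduceCtorEq, not_false_eq_true, true_and, or_false]

theorem adj_apex_pathVert_iff {e : G.edgeSet} {i : ℕ} (hi : i ≤ 2 * Fintype.card V) :
    (GG G).Adj (apex G) (pathVert e i) ↔ i = 0 := by
  simp only [GG, SimpleGraph.fromRel_adj, pathVert, apex, gRel, Fin.val_ofNat_of_le hi, ne_eq,
    Sum.inr.injEq, reduceCtorEq, not_false_eq_true, true_and, or_false]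

theorem mem_neighborSet_pathVert_iff {w : GVert G} {e : G.edgeSet} {i : ℕ}
    (hi : i ≤ 2 * Fintype.card V) :
    w ∈ (GG G).neighborSet (pathVert e i) ↔
      (i = 0 ∧ (w = apex G ∨ ∃ x ∈ (e : Sym2 V), w = Sum.inl x)) ∨
        ∃ j ≤ 2 * Fintype.card V, w = pathVert e j ∧ (j + 1 = i ∨ i + 1 = j) := by
  rw [SimpleGraph.mem_neighborSet, SimpleGraph.adj_comm]
  rcases w with x | ⟨e', j⟩ | ⟨⟩
  · rw [adj_inl_pathVert_iff hi]
    simp [pathVert, apex]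
  · rw [← pathVert_val, adj_pathVert_pathVert_iff j.is_le hi]
    have hj := j.is_le
    constructor
    · rintro ⟨rfl, h⟩
      exact Or.inr ⟨j, hj, rfl, h⟩
    · rintro (⟨-, h | ⟨x, -, h⟩⟩ | ⟨j', hj', h, hjj'⟩)
      · simp [pathVert, apex] at h
      · simp [pathVert] at h
      · obtain ⟨rfl, rfl⟩ := (pathVert_inj hj hj').mp h
        exact ⟨rfl, hjj'⟩
  · rw [show Sum.inr (Sum.inr ()) = apex G from rfl, adj_apex_pathVert_iff hi]
    simp [pathVert, apex]

theorem adj_pathVert_succ (e : G.edgeSet) {m : ℕ} (hm : m + 1 ≤ 2 * Fintype.card V) :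
    (GG G).Adj (pathVert e m) (pathVert e (m + 1)) :=
  (adj_pathVert_pathVert_iff (by omega) hm).mpr ⟨rfl, Or.inl rfl⟩

theorem neighborSet_pathVert_succ_subset (e : G.edgeSet) {m : ℕ}
    (hm : m + 2 ≤ 2 * Fintype.card V) :
    (GG G).neighborSet (pathVert e (m + 1)) ⊆ {pathVert e m, pathVert e (m + 2)} := by
  intro w hw
  rcases (mem_neighborSet_pathVert_iff (by omega)).mp hw with ⟨h, -⟩ | ⟨j, -, rfl, h | h⟩
  · omega
  · obtain rfl : j = m := by omega
    exact Or.inl rfl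
  · obtain rfl : j = m + 2 := by omega
    exact Or.inr rfl

theorem neighborSet_pathVert_last_subset (e : G.edgeSet) {m : ℕ}
    (hm : m + 1 = 2 * Fintype.card V) :
    (GG G).neighborSet (pathVert e (m + 1)) ⊆ {pathVert e m} := by
  intro w hw
  rcases (mem_neighborSet_pathVert_iff hm.le).mp hw with ⟨h, -⟩ | ⟨j, hj, rfl, h | h⟩
  · omega
  · obtain rfl : j = m := by omega
    rfl
  · omega

theorem neighborSet_pathVert_zero_subset {e : G.edgeSet} {u v : V}
    (he : (e : Sym2 V) = s(u, v)) :
    (GG G).neighborSet (pathVert e 0) ⊆ {Sum.inl u, Sum.inl v, apex G, pathVert e 1} := by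
  intro w hw
  rcases (mem_neighborSet_pathVert_iff (Nat.zero_le _)).mp hw with
    ⟨-, rfl | ⟨x, hx, rfl⟩⟩ | ⟨j, -, rfl, h | h⟩
  · simp
  · rw [he, Sym2.mem_iff] at hx
    rcases hx with rfl | rfl <;> simp
  · omega
  · obtain rfl : j = 1 := by omega
    simp

theorem natCard_gVert :
    Nat.card (GVert G) = Fintype.card V + (2 * Fintype.card V + 1) * G.edgeSet.ncard + 1 := by
  simp only [Nat.card_sum, Nat.card_prod, Nat.card_eq_fintype_card, Fintype.card_fin,
    Fintype.card_unit, Nat.card_coe_set_eq]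
  ring

theorem card_add_one_le_ncard_compl_add {S : Set (GVert G)} (hapex : apex G ∉ S) :
    Fintype.card V + 1 ≤ Sᶜ.ncard + {v | Sum.inl v ∈ S}.ncard := by
  set A : Set V := {v | Sum.inl v ∈ S}
  have hsub : insert (apex G) (Sum.inl '' Aᶜ) ⊆ Sᶜ := by
    rintro _ (rfl | ⟨v, hv, rfl⟩)
    exacts [hapex, hv]
  have hcard := Set.ncard_le_ncard hsub
  rw [Set.ncard_insert_of_notMem (by simp [apex]),
    Set.ncard_image_of_injective _ Sum.inl_injective] at hcard
  have hA : A.ncard + Aᶜ.ncard = Fintype.card V := by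
    rw [Set.ncard_add_ncard_compl, Nat.card_eq_fintype_card]
  omega

end GG

open GG

namespace SkewStalled

variable {V : Type*} [Fintype V] {G : SimpleGraph V} {S : Set (GVert G)}

theorem pathVert_mem_iff_of_mod_two_eq (hS : SkewStalled (GG G) S) (e : G.edgeSet) {i j : ℕ}
    (hi : i ≤ 2 * Fintype.card V) (hj : j ≤ 2 * Fintype.card V) (hij : i % 2 = j % 2) :
    pathVert e i ∈ S ↔ pathVert e j ∈ S :=
  Nat.iff_of_iff_add_two (p := fun m => pathVert e m ∈ S)
    (fun m hm => hS.mem_iff_of_neighborSet_subset_pair ((adj_pathVert_succ e (by omega)).symm)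
      (adj_pathVert_succ e hm) (neighborSet_pathVert_succ_subset e hm)) hi hj hij

theorem pathVert_mem_of_odd (hS : SkewStalled (GG G) S) (e : G.edgeSet) {i : ℕ}
    (hi : i ≤ 2 * Fintype.card V) (hodd : i % 2 = 1) : pathVert e i ∈ S := by
  obtain ⟨m, hm⟩ : ∃ m, m + 1 = 2 * Fintype.card V := ⟨2 * Fintype.card V - 1, by
    have := G.card_pos_of_edgeSet e
    omega⟩
  have hlast : pathVert e m ∈ S :=
    hS.mem_of_neighborSet_subset_singleton (adj_pathVert_succ e hm.le).symm
      (neighborSet_pathVert_last_subset e hm)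
  exact (hS.pathVert_mem_iff_of_mod_two_eq e hi (by omega) (by omega)).mpr hlast

theorem apex_mem_of_adj (hS : SkewStalled (GG G) S) {u v : V} (huv : G.Adj u v)
    (hu : Sum.inl u ∈ S) (hv : Sum.inl v ∈ S) : apex G ∈ S := by
  let e : G.edgeSet := ⟨s(u, v), huv⟩
  have h1 : pathVert e 1 ∈ S := hS.pathVert_mem_of_odd e (by have := G.card_pos_of_edgeSet e; omega) rfl
  refine hS.mem_of_neighborSet_subset_insert ((adj_apex_pathVert_iff (Nat.zero_le _)).mpr rfl).symm
    ((neighborSet_pathVert_zero_subset (e := e) rfl).trans ?_)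
  rintro w (rfl | rfl | rfl | rfl) <;> simp [*]

theorem inl_mem_of_adj (hS : SkewStalled (GG G) S) (hapex : apex G ∈ S) {u v : V}
    (huv : G.Adj u v) (hv : Sum.inl v ∈ S) : Sum.inl u ∈ S := by
  let e : G.edgeSet := ⟨s(u, v), huv⟩
  have h1 : pathVert e 1 ∈ S := hS.pathVert_mem_of_odd e (by have := G.card_pos_of_edgeSet e; omega) rfl
  refine hS.mem_of_neighborSet_subset_insert
    ((adj_inl_pathVert_iff (Nat.zero_le _)).mpr ⟨rfl, Sym2.mem_mk_left u v⟩).symm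
    ((neighborSet_pathVert_zero_subset (e := e) rfl).trans ?_)
  rintro w (rfl | rfl | rfl | rfl) <;> simp [*]

theorem inl_mem_of_reachable (hS : SkewStalled (GG G) S) (hapex : apex G ∈ S) {u v : V}
    (huv : G.Reachable u v) (hv : Sum.inl v ∈ S) : Sum.inl u ∈ S := by
  obtain ⟨p⟩ := huv
  induction p with
  | nil => exact hv
  | cons h _ ih => exact hS.inl_mem_of_adj hapex h (ih hv)

theorem indepIn_of_apex_notMem (hS : SkewStalled (GG G) S) (hapex : apex G ∉ S) :
    IndepIn G {v | Sum.inl v ∈ S} :=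
  fun _ hu _ hv _ huv => hapex (hS.apex_mem_of_adj huv hu hv)

theorem card_add_one_le_ncard_compl (hS : SkewStalled (GG G) S) {e : G.edgeSet} {i : ℕ}
    (hi : i ≤ 2 * Fintype.card V) (h : pathVert e i ∉ S) : Fintype.card V + 1 ≤ Sᶜ.ncard := by
  have heven : i % 2 = 0 := by
    by_contra hodd
    exact h (hS.pathVert_mem_of_odd e hi (by omega))
  have hcard := Set.ncard_le_ncard_of_injOn (s := (Finset.range (Fintype.card V + 1) : Set ℕ))
    (t := Sᶜ) (fun j => pathVert e (2 * j))
    (fun j hj => by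
      have : j < Fintype.card V + 1 := by simpa using hj
      exact (hS.pathVert_mem_iff_of_mod_two_eq e (by omega) hi (by omega)).not.mpr h)
    (fun j hj j' hj' hjj' => by
      simp only [Finset.coe_range, Set.mem_Iio] at hj hj'
      have := ((pathVert_inj (by omega) (by omega)).mp hjj').2
      omega)
  rwa [Set.ncard_coe_finset, Finset.card_range] at hcard

theorem card_le_ncard_compl_of_apex_mem (hS : SkewStalled (GG G) S) (hG : G.Preconnected)
    (hapex : apex G ∈ S) {u : V} (hu : Sum.inl u ∉ S) : Fintype.card V ≤ Sᶜ.ncard := by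
  have hcard := Set.ncard_le_ncard_of_injOn (s := Set.univ) (t := Sᶜ) Sum.inl
    (fun v _ hv => hu (hS.inl_mem_of_reachable hapex (hG u v) hv)) Sum.inl_injective.injOn
  rwa [Set.ncard_univ, Nat.card_eq_fintype_card] at hcard

end SkewStalled

/-- for connected `G` with independence number `k`, every proper skew
stalled subset of `𝒢` has cardinality at most `(2n+1)·|E| + k`. -/
theorem skewStalled_card_le {V : Type*} [Fintype V] (G : SimpleGraph V)
    (hG : G.Connected) (k : ℕ)
    (hk : IsGreatest {m | ∃ U : Set V, IndepIn G U ∧ U.ncard = m} k)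
    (S : Set (GVert G)) (hS : SkewStalled (GG G) S) (hproper : S ≠ Set.univ) :
    S.ncard ≤ (2 * Fintype.card V + 1) * G.edgeSet.ncard + k := by
  have hsum := Set.ncard_add_ncard_compl S
  rw [natCard_gVert] at hsum
  suffices Fintype.card V + 1 ≤ Sᶜ.ncard + k by omega
  by_cases hapex : apex G ∈ S
  · by_cases hV : ∀ v, Sum.inl v ∈ S
    · obtain ⟨x, hx⟩ := (Set.ne_univ_iff_exists_notMem S).mp hproper
      rcases x with v | ⟨e, i⟩ | ⟨⟩
      · exact absurd (hV v) hx
      · rw [← pathVert_val] at hx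
        exact (hS.card_add_one_le_ncard_compl i.is_le hx).trans (Nat.le_add_right _ _)
      · exact absurd hapex hx
    · obtain ⟨u, hu⟩ := not_forall.mp hV
      have hk1 : 1 ≤ k := hk.2 ⟨{u}, Set.pairwise_singleton _ _, Set.ncard_singleton u⟩
      have := hS.card_le_ncard_compl_of_apex_mem hG.preconnected hapex hu
      omega
  · have hindep := hk.2 ⟨_, hS.indepIn_of_apex_notMem hapex, rfl⟩
    have := card_add_one_le_ncard_compl_add hapex
    omega
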